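/- arXiv:1311.6544 — 2 statements merged into one kernel-verified Lean document; each statement's English description precedes it below -/
import Mathlib

section
/- For every topological space X and every subset A of X, the θ-closed hull of A satisfies |[A]_θ| ≤ (|A| · nu(X))^{κ(X)}. -/
open Set Topology Cardinal

universe u

variable {X : Type u}

/-- The θ-closure of a set. -/
def thetaCl [TopologicalSpace X] (A : Set X) : Set X :=
  {x | ∀ U : Set X, IsOpen U → x ∈ U → (closure U ∩ A).Nonempty}

/-- The θ-closed hull of a set. -/
def thetaHull [TopologicalSpace X] (A : Set X) : Set X :=
  ⋂₀ {C : Set X | thetaCl C = C ∧ A ⊆ C}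

/-- A nonempty set is finitely non-Urysohn if every finite choice of closed
neighborhoods (closures of open neighborhoods) of finitely many of its points
has nonempty intersection. -/
def FinNonUrysohn [TopologicalSpace X] (A : Set X) : Prop :=
  A.Nonempty ∧ ∀ F : Set X, F ⊆ A → F.Nonempty → F.Finite →
    ∀ U : X → Set X, (∀ x ∈ F, IsOpen (U x) ∧ x ∈ U x) →
      (⋂ x ∈ F, closure (U x)).Nonempty

/-- The non-Urysohn number `nu(X)`. -/
noncomputable def nuNumber (X : Type u) [TopologicalSpace X] : Cardinal.{u} :=
  1 + ⨆ A : {A : Set X // FinNonUrysohn A}, #↥A.1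

/-- The Urysohn number `U(X)`. -/
noncomputable def UrysohnNumber (X : Type u) [TopologicalSpace X] : Cardinal.{u} :=
  sInf {κ : Cardinal.{u} | ∀ A : Set X, κ ≤ #↥A → ∃ U : X → Set X,
    (∀ a ∈ A, IsOpen (U a) ∧ a ∈ U a) ∧ (⋂ a ∈ A, closure (U a)) = ∅}

/-- The cardinal function `κ(X)`: the smallest infinite cardinal such that each
point has a family of at most that many closed neighborhoods cofinal (under
reverse inclusion) in the closures of its open neighborhoods. -/
noncomputable def kappaInv (X : Type u) [TopologicalSpace X] : Cardinal.{u} :=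
  sInf {κ : Cardinal.{u} | ℵ₀ ≤ κ ∧ ∀ x : X, ∃ V : Set (Set X), #↥V ≤ κ ∧
    (∀ W ∈ V, IsClosed W ∧ W ∈ nhds x) ∧
    ∀ U : Set X, IsOpen U → x ∈ U → ∃ W ∈ V, W ⊆ closure U}

/-- The character `χ(X)`. -/
noncomputable def chiChar (X : Type u) [TopologicalSpace X] : Cardinal.{u} :=
  sInf {κ : Cardinal.{u} | ℵ₀ ≤ κ ∧ ∀ x : X, ∃ B : Set (Set X), #↥B ≤ κ ∧
    (∀ U ∈ B, U ∈ nhds x) ∧ ∀ S ∈ nhds x, ∃ U ∈ B, U ⊆ S}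

/-- The θ-density `d_θ(X)`. -/
noncomputable def dTheta (X : Type u) [TopologicalSpace X] : Cardinal.{u} :=
  sInf {c : Cardinal.{u} | ∃ A : Set X, thetaCl A = Set.univ ∧ #↥A = c}

/-- The cardinal function `sL_θ(X)`. -/
noncomputable def sLtheta (X : Type u) [TopologicalSpace X] : Cardinal.{u} :=
  sInf {τ : Cardinal.{u} | ℵ₀ ≤ τ ∧ ∀ A : Set X, ∀ 𝒰 : Set (Set X),
    (∀ U ∈ 𝒰, IsOpen U) → thetaCl A ⊆ ⋃₀ 𝒰 →
    ∃ 𝒱 ⊆ 𝒰, #↥𝒱 ≤ τ ∧ A ⊆ closure (⋃₀ 𝒱)}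

/-- The cardinal function `wL_c(X)`. -/
noncomputable def wLc (X : Type u) [TopologicalSpace X] : Cardinal.{u} :=
  sInf {τ : Cardinal.{u} | ℵ₀ ≤ τ ∧ ∀ A : Set X, IsClosed A → ∀ 𝒰 : Set (Set X),
    (∀ U ∈ 𝒰, IsOpen U) → A ⊆ ⋃₀ 𝒰 →
    ∃ 𝒱 ⊆ 𝒰, #↥𝒱 ≤ τ ∧ A ⊆ closure (⋃₀ 𝒱)}

/-- The almost Lindelöf degree `aL(X)`. -/
noncomputable def aLdeg (X : Type u) [TopologicalSpace X] : Cardinal.{u} :=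
  sInf {τ : Cardinal.{u} | ℵ₀ ≤ τ ∧ ∀ 𝒰 : Set (Set X),
    (∀ U ∈ 𝒰, IsOpen U) → ⋃₀ 𝒰 = Set.univ →
    ∃ 𝒱 ⊆ 𝒰, #↥𝒱 ≤ τ ∧ (⋃ V ∈ 𝒱, closure V) = Set.univ}

/-- `X` is a Urysohn space: distinct points have open neighborhoods with
disjoint closures. -/
def UrysohnSpace (X : Type u) [TopologicalSpace X] : Prop :=
  ∀ x y : X, x ≠ y → ∃ U V : Set X, IsOpen U ∧ IsOpen V ∧ x ∈ U ∧ y ∈ V ∧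
    closure U ∩ closure V = ∅

/-- For a set `S`, the intersection over all choices of closed neighborhoods of
the points of `S` of the θ-closures of the intersections of the choices. -/
def capSet [TopologicalSpace X] (S : Set X) : Set X :=
  {y | ∀ U : X → Set X, (∀ a ∈ S, IsOpen (U a) ∧ a ∈ U a) →
    y ∈ thetaCl (⋂ a ∈ S, closure (U a))}

/-- For a set `M`, the intersection over all nonempty finite `F ⊆ M` and all
choices of open neighborhoods of points of `F` of
`cl_θ(⋂_{x∈F} closure (U x))`. -/
def fnuCap [TopologicalSpace X] (M : Set X) : Set X :=
  {y | ∀ F : Set X, F ⊆ M → F.Nonempty → F.Finite → ∀ U : X → Set X,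
    (∀ x ∈ F, IsOpen (U x) ∧ x ∈ U x) →
    y ∈ thetaCl (⋂ x ∈ F, closure (U x))}

/-!
Fix, for every point `x`, closed neighbourhoods `W x k` (`k ∈ K`, `|K| = κ(X)`) such that the
closure of every open neighbourhood of `x` contains one of them. A point `x ∈ cl_θ B` picks, for
each finite `s ⊆ K`, a point of `B` in `⋂_{k ∈ s} W x k`; the points making the same choices form
a finitely non-Urysohn set, so `|cl_θ B| ≤ |B|^κ · nu(X)`. Iterating `B ↦ cl_θ (A ∪ B)` along
`κ⁺` therefore stays below `c = (|A| · nu(X))^κ`, and since `κ⁺` is regular the union of the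
iteration is θ-closed, hence contains `[A]_θ`.
-/

lemma subset_thetaCl [TopologicalSpace X] (A : Set X) : A ⊆ thetaCl A :=
  fun x hx _ _ hxU => ⟨x, subset_closure hxU, hx⟩

lemma thetaCl_empty [TopologicalSpace X] : thetaCl (∅ : Set X) = ∅ :=
  eq_empty_of_forall_notMem fun x hx => by
    simpa using hx univ isOpen_univ (mem_univ x)

lemma inter_nonempty_of_mem_thetaCl [TopologicalSpace X] {B W : Set X} {x : X}
    (hx : x ∈ thetaCl B) (hW : IsClosed W) (hWx : W ∈ 𝓝 x) : (W ∩ B).Nonempty := by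
  obtain ⟨U, hUW, hU, hxU⟩ := mem_nhds_iff.mp hWx
  obtain ⟨y, hyU, hyB⟩ := hx U hU hxU
  exact ⟨y, hW.closure_subset_iff.mpr hUW hyU, hyB⟩

lemma thetaHull_subset [TopologicalSpace X] {A C : Set X} (hC : thetaCl C ⊆ C) (hAC : A ⊆ C) :
    thetaHull A ⊆ C :=
  sInter_subset_of_mem ⟨hC.antisymm (subset_thetaCl C), hAC⟩

lemma mk_le_iSup_finNonUrysohn [TopologicalSpace X] {S : Set X} (hS : FinNonUrysohn S) :
    #S ≤ ⨆ A : {A : Set X // FinNonUrysohn A}, #↥A.1 :=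
  le_ciSup bddAbove_of_small (⟨S, hS⟩ : {A : Set X // FinNonUrysohn A})

lemma mk_le_nuNumber [TopologicalSpace X] {S : Set X} (hS : FinNonUrysohn S) :
    #S ≤ nuNumber X :=
  (mk_le_iSup_finNonUrysohn hS).trans le_add_self

lemma finNonUrysohn_singleton [TopologicalSpace X] (x : X) : FinNonUrysohn ({x} : Set X) := by
  refine ⟨singleton_nonempty x, fun F hF _ _ U hU => ⟨x, mem_iInter₂.mpr fun y hy => ?_⟩⟩
  obtain rfl : y = x := hF hy
  exact subset_closure (hU y hy).2

lemma two_le_nuNumber [TopologicalSpace X] [Nonempty X] : 2 ≤ nuNumber X := by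
  rw [nuNumber, ← one_add_one_eq_two]
  gcongr
  simpa using mk_le_iSup_finNonUrysohn (finNonUrysohn_singleton (Classical.arbitrary X))

structure ThetaNhdSystem (X : Type u) [TopologicalSpace X] (K : Type u) where
  nhd : X → K → Set X
  isClosed_nhd : ∀ x k, IsClosed (nhd x k)
  nhd_mem_nhds : ∀ x k, nhd x k ∈ 𝓝 x
  exists_nhd_subset_closure : ∀ x U, IsOpen U → x ∈ U → ∃ k, nhd x k ⊆ closure U

lemma kappaInv_spec (X : Type u) [TopologicalSpace X] :
    ℵ₀ ≤ kappaInv X ∧ Nonempty (ThetaNhdSystem X (kappaInv X).out) := by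
  have hne : {κ : Cardinal.{u} | ℵ₀ ≤ κ ∧ ∀ x : X, ∃ V : Set (Set X), #V ≤ κ ∧
      (∀ W ∈ V, IsClosed W ∧ W ∈ 𝓝 x) ∧
      ∀ U : Set X, IsOpen U → x ∈ U → ∃ W ∈ V, W ⊆ closure U}.Nonempty := by
    refine ⟨max ℵ₀ #(Set X), le_max_left _ _, fun x => ?_⟩
    refine ⟨closure '' {U | IsOpen U ∧ x ∈ U}, (mk_set_le _).trans (le_max_right _ _), ?_,
      fun U hU hxU => ⟨closure U, mem_image_of_mem _ ⟨hU, hxU⟩, subset_rfl⟩⟩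
    rintro _ ⟨U, ⟨hU, hxU⟩, rfl⟩
    exact ⟨isClosed_closure, Filter.mem_of_superset (hU.mem_nhds hxU) subset_closure⟩
  obtain ⟨hκ, hV⟩ := csInf_mem hne
  refine ⟨hκ, ?_⟩
  choose V hVκ hVnhd hVsub using hV
  -- `V x` is nonempty (it refines `closure univ`), hence an image of `(kappaInv X).out`.
  have hsurj : ∀ x, ∃ e : (kappaInv X).out → V x, Function.Surjective e := fun x => by
    obtain ⟨W, hW, -⟩ := hVsub x univ isOpen_univ (mem_univ x)
    have : Nonempty (V x) := ⟨⟨W, hW⟩⟩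
    obtain ⟨f⟩ := le_def _ _ |>.mp ((hVκ x).trans_eq (mk_out _).symm)
    exact ⟨Function.invFun f, Function.invFun_surjective f.injective⟩
  choose e he using hsurj
  refine ⟨⟨fun x k => e x k, fun x k => (hVnhd x _ (e x k).2).1,
    fun x k => (hVnhd x _ (e x k).2).2, fun x U hU hxU => ?_⟩⟩
  obtain ⟨W, hW, hWU⟩ := hVsub x U hU hxU
  obtain ⟨k, hk⟩ := he x ⟨W, hW⟩
  exact ⟨k, by rw [hk]; exact hWU⟩

namespace ThetaNhdSystem

variable [TopologicalSpace X] {K : Type u}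

lemma mem_thetaCl_iff (S : ThetaNhdSystem X K) {B : Set X} {x : X} :
    x ∈ thetaCl B ↔ ∀ k, (S.nhd x k ∩ B).Nonempty := by
  refine ⟨fun hx k => inter_nonempty_of_mem_thetaCl hx (S.isClosed_nhd x k) (S.nhd_mem_nhds x k),
    fun h U hU hxU => ?_⟩
  obtain ⟨k, hk⟩ := S.exists_nhd_subset_closure x U hU hxU
  exact (h k).mono (inter_subset_inter_left B hk)

lemma finNonUrysohn_of_forall_mem_nhd (S : ThetaNhdSystem X K) {T : Set X} (hT : T.Nonempty)
    (g : Finset K → X) (hg : ∀ x ∈ T, ∀ s : Finset K, ∀ k ∈ s, g s ∈ S.nhd x k) :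
    FinNonUrysohn T := by
  have : Nonempty K :=
    let ⟨x, _⟩ := hT; ⟨(S.exists_nhd_subset_closure x univ isOpen_univ (mem_univ x)).choose⟩
  classical
  refine ⟨hT, fun F hFT _ hF U hU => ?_⟩
  choose! k hk using fun x (hx : x ∈ F) =>
    S.exists_nhd_subset_closure x (U x) (hU x hx).1 (hU x hx).2
  refine ⟨g (hF.toFinset.image k), mem_iInter₂.mpr fun x hx => hk x hx ?_⟩
  exact hg x (hFT hx) _ (k x) (Finset.mem_image_of_mem k (hF.mem_toFinset.mpr hx))

lemma mk_thetaCl_le (S : ThetaNhdSystem X K) [Infinite K] (B : Set X) :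
    #(thetaCl B) ≤ #B ^ #K * nuNumber X := by
  have hsel : ∀ x : thetaCl B, ∀ s : Finset K, ∃ b : B, ∀ k ∈ s, (b : X) ∈ S.nhd x k := by
    intro x s
    obtain ⟨b, hbW, hbB⟩ := inter_nonempty_of_mem_thetaCl x.2
      (isClosed_biInter fun k _ => S.isClosed_nhd x k)
      ((Filter.biInter_finset_mem s).mpr fun k _ => S.nhd_mem_nhds x k)
    exact ⟨⟨b, hbB⟩, mem_iInter₂.mp hbW⟩
  choose q hq using hsel
  have hfiber : ∀ g, #(q ⁻¹' {g}) ≤ nuNumber X := fun g => by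
    rcases (q ⁻¹' {g}).eq_empty_or_nonempty with h | h
    · simp [h]
    rw [← mk_image_eq Subtype.val_injective]
    refine mk_le_nuNumber (S.finNonUrysohn_of_forall_mem_nhd (h.image _) (fun s => g s) ?_)
    rintro _ ⟨x, rfl, rfl⟩ s k hk
    exact hq x s k hk
  calc #(thetaCl B) ≤ #(Finset K → B) * nuNumber X := mk_le_mk_mul_of_mk_preimage_le q hfiber
    _ = #B ^ #K * nuNumber X := by rw [← power_def, mk_finset_of_infinite]

lemma mk_thetaCl_le_of_le (S : ThetaNhdSystem X K) [Infinite K] {c : Cardinal.{u}}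
    (hc : ℵ₀ ≤ c) (hcK : c ^ #K = c) (hν : nuNumber X ≤ c) {B : Set X} (hB : #B ≤ c) :
    #(thetaCl B) ≤ c :=
  calc #(thetaCl B) ≤ #B ^ #K * nuNumber X := S.mk_thetaCl_le B
    _ ≤ c ^ #K * c := mul_le_mul' (power_le_power_right hB) hν
    _ = c := by rw [hcK, mul_eq_self hc]

end ThetaNhdSystem

lemma mk_iUnion_le_of_forall_le {α ι : Type u} {f : ι → Set α} {c : Cardinal.{u}}
    (hc : ℵ₀ ≤ c) (hι : #ι ≤ c) (hf : ∀ i, #(f i) ≤ c) : #(⋃ i, f i) ≤ c :=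
  calc #(⋃ i, f i) ≤ #ι * ⨆ i, #(f i) := mk_iUnion_le f
    _ ≤ c * c := mul_le_mul' hι (ciSup_le' hf)
    _ = c := mul_eq_self hc

lemma exists_forall_lt_of_mk_lt_cof {ι K : Type u} [LinearOrder ι] (f : K → ι)
    (h : #K < Order.cof ι) : ∃ t, ∀ k, f k < t := by
  have hf : ¬IsCofinal (range f) := fun hf => ((Order.cof_le hf).trans mk_range_le).not_gt h
  simpa [IsCofinal] using hf

lemma exists_forall_lt_of_mk_le {κ : Cardinal.{u}} (hκ : ℵ₀ ≤ κ) {K : Type u} (hK : #K ≤ κ)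
    (f : K → (Order.succ κ).ord.ToType) : ∃ t, ∀ k, f k < t :=
  exists_forall_lt_of_mk_lt_cof f <| by
    rw [Ordinal.cof_toType, (isRegular_succ hκ).cof_ord]
    exact hK.trans_lt (Order.lt_succ κ)

lemma succ_le_power_of_two_le {μ : Cardinal} (hμ : 2 ≤ μ) (κ : Cardinal) :
    Order.succ κ ≤ μ ^ κ :=
  Order.succ_le_of_lt ((cantor κ).trans_le (power_le_power_right hμ))

section ThetaChain

variable [TopologicalSpace X] {ι : Type u} [LT ι] [WellFoundedLT ι]

noncomputable def thetaChain (A : Set X) : ι → Set X :=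
  wellFounded_lt.fix fun i rec => thetaCl (A ∪ ⋃ j : {j // j < i}, rec j.1 j.2)

lemma thetaChain_eq (A : Set X) (i : ι) :
    thetaChain A i = thetaCl (A ∪ ⋃ j : {j // j < i}, thetaChain A j.1) := by
  rw [thetaChain, WellFounded.fix_eq]

lemma subset_thetaChain (A : Set X) (i : ι) : A ⊆ thetaChain A i := by
  rw [thetaChain_eq]
  exact subset_union_left.trans (subset_thetaCl _)

lemma mk_thetaChain_le {A : Set X} {c : Cardinal.{u}} (hc : ℵ₀ ≤ c) (hι : #ι ≤ c)
    (hA : #A ≤ c) (hcl : ∀ B : Set X, #B ≤ c → #(thetaCl B) ≤ c) (i : ι) :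
    #(thetaChain A i) ≤ c := by
  induction i using WellFoundedLT.induction with
  | _ i ih =>
  rw [thetaChain_eq]
  refine hcl _ ((mk_union_le _ _).trans ?_)
  have hunion : #(⋃ j : {j // j < i}, thetaChain A j.1) ≤ c :=
    mk_iUnion_le_of_forall_le hc ((mk_subtype_le _).trans hι) fun j => ih j.1 j.2
  calc #A + #(⋃ j : {j // j < i}, thetaChain A j.1) ≤ c + c := add_le_add hA hunion
    _ = c := add_eq_self hc

-- A point of `cl_θ` of the union is witnessed by `|K|` points, which appear at some common stage.
lemma thetaCl_iUnion_thetaChain_subset {K : Type u} (S : ThetaNhdSystem X K) (A : Set X)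
    (hbdd : ∀ f : K → ι, ∃ t, ∀ k, f k < t) :
    thetaCl (⋃ i : ι, thetaChain A i) ⊆ ⋃ i : ι, thetaChain A i := by
  intro x hx
  choose p hpW hpH using (S.mem_thetaCl_iff).mp hx
  choose idx hidx using fun k => mem_iUnion.mp (hpH k)
  obtain ⟨t, ht⟩ := hbdd idx
  refine mem_iUnion.mpr ⟨t, ?_⟩
  rw [thetaChain_eq, S.mem_thetaCl_iff]
  exact fun k => ⟨p k, hpW k, Or.inr (mem_iUnion.mpr ⟨⟨idx k, ht k⟩, hidx k⟩)⟩

lemma thetaHull_subset_iUnion_thetaChain [Nonempty ι] {K : Type u} (S : ThetaNhdSystem X K)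
    (A : Set X) (hbdd : ∀ f : K → ι, ∃ t, ∀ k, f k < t) :
    thetaHull A ⊆ ⋃ i : ι, thetaChain A i :=
  thetaHull_subset (thetaCl_iUnion_thetaChain_subset S A hbdd)
    ((subset_thetaChain A (Classical.arbitrary ι)).trans (subset_iUnion _ _))

end ThetaChain

theorem statement7 [TopologicalSpace X] (A : Set X) :
    #↥(thetaHull A) ≤ (#↥A * nuNumber X) ^ kappaInv X := by
  obtain ⟨hκ, ⟨S⟩⟩ := kappaInv_spec X
  rcases A.eq_empty_or_nonempty with rfl | hA
  · simp [eq_empty_of_subset_empty (thetaHull_subset thetaCl_empty.le subset_rfl)]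
  have : Nonempty X := hA.to_subtype.map Subtype.val
  set κ := kappaInv X
  set ν := nuNumber X
  set c := (#A * ν) ^ κ
  have hA1 : 1 ≤ #A := Cardinal.one_le_iff_ne_zero.mpr (mk_ne_zero_iff.mpr hA.to_subtype)
  have hν2 : 2 ≤ ν := two_le_nuNumber
  have hAνc : #A * ν ≤ c := self_le_power _ (one_le_aleph0.trans hκ)
  have hνc : ν ≤ c := (le_mul_of_one_le_left' hA1).trans hAνc
  have hAc : #A ≤ c := (le_mul_of_one_le_right' (one_le_two.trans hν2)).trans hAνc
  have hκc : Order.succ κ ≤ c :=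
    succ_le_power_of_two_le (hν2.trans (le_mul_of_one_le_left' hA1)) κ
  have hc : ℵ₀ ≤ c := hκ.trans ((Order.le_succ κ).trans hκc)
  have hcκ : c ^ #κ.out = c := by rw [mk_out, ← power_mul, mul_eq_self hκ]
  have : Infinite κ.out := infinite_iff.mpr (by rwa [mk_out])
  let ι := (Order.succ κ).ord.ToType
  have hιc : #ι ≤ c := by rwa [mk_toType, card_ord]
  have : Nonempty ι := mk_ne_zero_iff.mp (by simp [ι])
  calc #(thetaHull A) ≤ #(⋃ i : ι, thetaChain A i) := mk_le_mk_of_subset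
        (thetaHull_subset_iUnion_thetaChain S A (exists_forall_lt_of_mk_le hκ (mk_out κ).le))
    _ ≤ c := mk_iUnion_le_of_forall_le hc hιc
        (mk_thetaChain_le hc hιc hAc fun _ => S.mk_thetaCl_le_of_le hc hcκ hνc)
end

section
/- If X is a Urysohn space, then |X| ≤ 2^{κ(X)·aL(X)}. -/
open Set Topology Cardinal

universe u

variable {X : Type u}

/-!
Put `κ = κ(X)·aL(X)` and fix at every point `x` a family `V x` of at most `κ` closed
neighbourhoods such that the closure of every open neighbourhood of `x` contains one of them.
In a Urysohn space a point of the θ-closure of `B` is determined by the traces on `B` of its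
family, so θ-closures of sets of size `≤ κ` have size `≤ 2^κ`. A closing-off argument of length
`κ⁺` then gives `A` with `|A| ≤ 2^κ` that contains the θ-closure of each of its `κ`-small subsets
(hence is θ-closed) and, for every `κ`-small subfamily `𝒲` of `⋃_{x ∈ A} V x` not covering `X`,
a point outside `⋃ 𝒲`. If `q ∉ A`, cover `A` by interiors of members of the families missing
`q` and `X \ A` by open sets whose closures miss `A`; almost Lindelöfness yields `κ` of them
whose closures cover `X`, so `κ` members of the families cover `A` but not `q`, contradicting
the choice of `A`.
-/

section ClosingOff

variable {α : Type u} (κ : Cardinal.{u}) (Φ : Set α → Set α)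

theorem mk_bounded_subset_le_two_power (hκ : ℵ₀ ≤ κ) {s : Set α} (hs : #s ≤ 2 ^ κ) :
    #{t : Set α | t ⊆ s ∧ #t ≤ κ} ≤ 2 ^ κ :=
  calc #{t : Set α | t ⊆ s ∧ #t ≤ κ} ≤ max #s ℵ₀ ^ κ := mk_bounded_subset_le s κ
    _ ≤ (2 ^ κ) ^ κ := power_le_power_right (max_le hs (hκ.trans (cantor κ).le))
    _ = 2 ^ κ := by rw [← power_mul, mul_eq_self hκ]

def closeUnder (S : Set α) : Set α :=
  ⋃ B ∈ {B : Set α | B ⊆ S ∧ #B ≤ κ}, Φ B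

theorem subset_closeUnder {S B : Set α} (hBS : B ⊆ S) (hB : #B ≤ κ) :
    Φ B ⊆ closeUnder κ Φ S :=
  subset_biUnion_of_mem (u := Φ) (show B ∈ {B : Set α | B ⊆ S ∧ #B ≤ κ} from ⟨hBS, hB⟩)

theorem mk_closeUnder_le (hκ : ℵ₀ ≤ κ) (hΦ : ∀ B : Set α, #B ≤ κ → #(Φ B) ≤ 2 ^ κ) {S : Set α}
    (hS : #S ≤ 2 ^ κ) : #(closeUnder κ Φ S) ≤ 2 ^ κ :=
  calc #(closeUnder κ Φ S) ≤ 2 ^ κ * 2 ^ κ :=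
        (mk_biUnion_le _ _).trans <| mul_le_mul' (mk_bounded_subset_le_two_power κ hκ hS)
          (ciSup_le' fun B => hΦ B B.2.2)
    _ = 2 ^ κ := mul_eq_self (hκ.trans (cantor κ).le)

noncomputable def closingOffSeq : Ordinal.{u} → Set α :=
  Ordinal.lt_wf.fix fun o seq => closeUnder κ Φ (⋃ β, ⋃ h : β < o, seq β h)

theorem closingOffSeq_eq (o : Ordinal.{u}) :
    closingOffSeq κ Φ o = closeUnder κ Φ (⋃ β < o, closingOffSeq κ Φ β) :=
  Ordinal.lt_wf.fix_eq _ o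

theorem mk_closingOffSeq_le (hκ : ℵ₀ ≤ κ) (hΦ : ∀ B : Set α, #B ≤ κ → #(Φ B) ≤ 2 ^ κ)
    {o : Ordinal.{u}} (ho : o < (Order.succ κ).ord) : #(closingOffSeq κ Φ o) ≤ 2 ^ κ := by
  induction o using WellFoundedLT.induction with
  | ind o ih =>
    have ho' : o.card ≤ 2 ^ κ :=
      (Order.lt_succ_iff.1 (Cardinal.lt_ord.1 ho)).trans (cantor κ).le
    rw [closingOffSeq_eq]
    exact mk_closeUnder_le κ Φ hκ hΦ <| mk_biUnion_le_of_le ho' (hκ.trans (cantor κ).le) _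
      fun β hβ => ih β hβ (hβ.trans ho)

/-- The union of the first `κ⁺` stages works: by regularity of `κ⁺`, every `κ`-small subset of
it lies below some stage. -/
theorem exists_mk_le_two_power_forall_subset (hκ : ℵ₀ ≤ κ)
    (hΦ : ∀ B : Set α, #B ≤ κ → #(Φ B) ≤ 2 ^ κ) :
    ∃ A : Set α, #A ≤ 2 ^ κ ∧ ∀ B ⊆ A, #B ≤ κ → Φ B ⊆ A := by
  set O := (Order.succ κ).ord
  refine ⟨⋃ o < O, closingOffSeq κ Φ o, ?_, fun B hBA hB => ?_⟩
  · refine mk_biUnion_le_of_le ?_ (hκ.trans (cantor κ).le) _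
      fun o ho => mk_closingOffSeq_le κ Φ hκ hΦ ho
    rw [card_ord]
    exact Order.succ_le_of_lt (cantor κ)
  choose r hrO hr using fun b : B => mem_iUnion₂.1 (hBA b.2)
  have hγ : ⨆ b, r b + 1 < O := by
    refine Ordinal.iSup_add_one_lt_of_lt_cof ?_ hrO
    rw [(isRegular_succ hκ).cof_ord]
    exact hB.trans_lt (Order.lt_succ κ)
  have hBγ : B ⊆ ⋃ β < ⨆ b, r b + 1, closingOffSeq κ Φ β := fun b hb =>
    mem_biUnion (Ordinal.lt_iSup_add_one r ⟨b, hb⟩) (hr ⟨b, hb⟩)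
  calc Φ B ⊆ closingOffSeq κ Φ (⨆ b, r b + 1) := by
        rw [closingOffSeq_eq]; exact subset_closeUnder κ Φ hBγ hB
    _ ⊆ ⋃ o < O, closingOffSeq κ Φ o := subset_biUnion_of_mem (u := closingOffSeq κ Φ) hγ

end ClosingOff

section Theta

variable [TopologicalSpace X]

structure IsThetaNhdBasis (x : X) (V : Set (Set X)) : Prop where
  isClosed : ∀ W ∈ V, IsClosed W
  mem_nhds : ∀ W ∈ V, W ∈ 𝓝 x
  exists_subset_closure : ∀ U : Set X, IsOpen U → x ∈ U → ∃ W ∈ V, W ⊆ closure U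

variable (X) in
theorem kappaInv_spec_s12 :
    ℵ₀ ≤ kappaInv X ∧ ∀ x : X, ∃ V : Set (Set X), #V ≤ kappaInv X ∧ IsThetaNhdBasis x V := by
  obtain ⟨hκ, hV⟩ : kappaInv X ∈ _ := csInf_mem
    ⟨max ℵ₀ #(Set X), le_max_left _ _, fun x => ⟨{W | IsClosed W ∧ W ∈ 𝓝 x},
      le_max_of_le_right (mk_set_le _), fun W hW => hW, fun U hU hxU =>
        ⟨closure U, ⟨isClosed_closure, Filter.mem_of_superset (hU.mem_nhds hxU) subset_closure⟩,
          subset_rfl⟩⟩⟩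
  refine ⟨hκ, fun x => ?_⟩
  obtain ⟨V, hVκ, hVnhds, hVsub⟩ := hV x
  exact ⟨V, hVκ, fun W hW => (hVnhds W hW).1, fun W hW => (hVnhds W hW).2, hVsub⟩

variable (X) in
theorem aLdeg_spec :
    ℵ₀ ≤ aLdeg X ∧ ∀ U : X → Set X, (∀ x, IsOpen (U x)) → (∀ x, x ∈ U x) →
      ∃ C : Set X, #C ≤ aLdeg X ∧ ⋃ x ∈ C, closure (U x) = Set.univ := by
  obtain ⟨hκ, hcov⟩ : aLdeg X ∈ _ := csInf_mem
    ⟨max ℵ₀ #(Set X), le_max_left _ _, fun 𝒰 _ h𝒰 => ⟨𝒰, subset_rfl,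
      le_max_of_le_right (mk_set_le _), eq_univ_of_forall fun x =>
        let ⟨U, hU, hxU⟩ := mem_sUnion.1 (h𝒰 ▸ mem_univ x)
        mem_biUnion hU (subset_closure hxU)⟩⟩
  refine ⟨hκ, fun U hU hxU => ?_⟩
  obtain ⟨𝒱, h𝒱U, h𝒱κ, h𝒱⟩ := hcov (range U) (forall_mem_range.2 hU)
    (eq_univ_of_forall fun x => mem_sUnion_of_mem (hxU x) (mem_range_self x))
  choose c hc using fun v : 𝒱 => h𝒱U v.2
  refine ⟨range c, mk_range_le.trans h𝒱κ, eq_univ_of_forall fun y => ?_⟩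
  obtain ⟨v, hv, hyv⟩ := mem_iUnion₂.1 (h𝒱 ▸ mem_univ y)
  exact mem_biUnion (mem_range_self ⟨v, hv⟩) (hc ⟨v, hv⟩ ▸ hyv)

theorem UrysohnSpace.t2Space (hX : UrysohnSpace X) : T2Space X where
  t2 x y hxy := by
    obtain ⟨U, V, hU, hV, hxU, hyV, hUV⟩ := hX x y hxy
    exact ⟨U, V, hU, hV, hxU, hyV,
      (disjoint_iff_inter_eq_empty.2 hUV).mono subset_closure subset_closure⟩

theorem inter_nonempty_of_mem_thetaCl_s12 {A N : Set X} {x : X} (hx : x ∈ thetaCl A)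
    (hN : IsClosed N) (hNx : N ∈ 𝓝 x) : (N ∩ A).Nonempty :=
  (hx _ isOpen_interior (mem_interior_iff_mem_nhds.2 hNx)).mono
    (inter_subset_inter_left _ (closure_minimal interior_subset hN))

namespace IsThetaNhdBasis

variable {x : X} {V : Set (Set X)}

theorem mem_thetaCl_iff (hV : IsThetaNhdBasis x V) {A : Set X} :
    x ∈ thetaCl A ↔ ∀ W ∈ V, (W ∩ A).Nonempty := by
  refine ⟨fun hx W hW => inter_nonempty_of_mem_thetaCl_s12 hx (hV.isClosed W hW) (hV.mem_nhds W hW),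
    fun h U hU hxU => ?_⟩
  obtain ⟨W, hWV, hWU⟩ := hV.exists_subset_closure U hU hxU
  exact (h W hWV).mono (inter_subset_inter_left _ hWU)

theorem exists_subset_mk_le_mem_thetaCl (hV : IsThetaNhdBasis x V) {A : Set X}
    (hx : x ∈ thetaCl A) : ∃ B ⊆ A, #B ≤ #V ∧ x ∈ thetaCl B := by
  choose b hbW hbA using fun W : V => hV.mem_thetaCl_iff.1 hx W W.2
  exact ⟨range b, range_subset_iff.2 hbA, mk_range_le,
    hV.mem_thetaCl_iff.2 fun W hW => ⟨b ⟨W, hW⟩, hbW ⟨W, hW⟩, mem_range_self _⟩⟩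

theorem exists_notMem [T2Space X] (hV : IsThetaNhdBasis x V) {q : X} (hxq : x ≠ q) :
    ∃ W ∈ V, q ∉ W := by
  obtain ⟨U, U', hU, hU', hxU, hqU', hUU'⟩ := t2_separation hxq
  obtain ⟨W, hWV, hWU⟩ := hV.exists_subset_closure U hU hxU
  exact ⟨W, hWV, fun hqW =>
    closure_minimal hUU'.subset_compl_right hU'.isClosed_compl (hWU hqW) hqU'⟩

end IsThetaNhdBasis

structure IsClosedOff (κ : Cardinal.{u}) (V : X → Set (Set X)) (A : Set X) : Prop where
  thetaCl_subset : ∀ B ⊆ A, #B ≤ κ → thetaCl B ⊆ A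
  sUnion_eq_univ : ∀ B ⊆ A, #B ≤ κ → ∀ 𝒲 ⊆ ⋃ x ∈ B, V x, #𝒲 ≤ κ → A ⊆ ⋃₀ 𝒲 →
    ⋃₀ 𝒲 = Set.univ

variable {V : X → Set (Set X)} {κ : Cardinal.{u}}

/-- Distinct `q`, `q'` have `W ∈ V q`, `W' ∈ V q'` inside disjoint closures. Equal traces give
`W₂ ∈ V q'` with `W ∩ B = W₂ ∩ B`, and `q' ∈ cl_θ B` puts a point of `B` in `W₂ ∩ W' ⊆ W ∩ W'`. -/
theorem UrysohnSpace.injOn_image_inter_thetaCl (hX : UrysohnSpace X)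
    (hV : ∀ x, IsThetaNhdBasis x (V x)) (B : Set X) :
    InjOn (fun x => (· ∩ B) '' V x) (thetaCl B) := by
  intro q _ q' hq' (hqq' : (· ∩ B) '' V q = (· ∩ B) '' V q')
  by_contra hne
  obtain ⟨U, U', hU, hU', hqU, hq'U', hUU'⟩ := hX q q' hne
  obtain ⟨W, hWV, hWU⟩ := (hV q).exists_subset_closure U hU hqU
  obtain ⟨W', hW'V, hW'U'⟩ := (hV q').exists_subset_closure U' hU' hq'U'
  obtain ⟨W₂, hW₂V, hW₂⟩ : W ∩ B ∈ (· ∩ B) '' V q' := hqq' ▸ mem_image_of_mem _ hWV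
  obtain ⟨b, ⟨hbW₂, hbW'⟩, hbB⟩ := inter_nonempty_of_mem_thetaCl_s12 hq'
    (((hV q').isClosed W₂ hW₂V).inter ((hV q').isClosed W' hW'V))
    (Filter.inter_mem ((hV q').mem_nhds W₂ hW₂V) ((hV q').mem_nhds W' hW'V))
  have hbW : b ∈ W := (hW₂ ▸ ⟨hbW₂, hbB⟩ : b ∈ W ∩ B).1
  exact hUU'.subset ⟨hWU hbW, hW'U' hbW'⟩

theorem UrysohnSpace.mk_thetaCl_le (hX : UrysohnSpace X) (hκ : ℵ₀ ≤ κ)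
    (hV : ∀ x, IsThetaNhdBasis x (V x)) (hVκ : ∀ x, #(V x) ≤ κ) {B : Set X} (hB : #B ≤ κ) :
    #(thetaCl B) ≤ 2 ^ κ := by
  rw [← mk_image_eq_of_injOn _ _ (hX.injOn_image_inter_thetaCl hV B)]
  refine (mk_le_mk_of_subset ?_).trans (mk_bounded_subset_le_two_power κ hκ
    ((mk_powerset B).trans_le (power_le_power_left two_ne_zero hB)))
  rintro _ ⟨x, -, rfl⟩
  exact ⟨image_subset_iff.2 fun W _ => inter_subset_right, mk_image_le.trans (hVκ x)⟩

theorem UrysohnSpace.exists_isClosedOff [Nonempty X] (hX : UrysohnSpace X) (hκ : ℵ₀ ≤ κ)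
    (hV : ∀ x, IsThetaNhdBasis x (V x)) (hVκ : ∀ x, #(V x) ≤ κ) :
    ∃ A : Set X, #A ≤ 2 ^ κ ∧ IsClosedOff κ V A := by
  have h2κ : ℵ₀ ≤ 2 ^ κ := hκ.trans (cantor κ).le
  have hw (𝒲 : Set (Set X)) : ∃ x, ⋃₀ 𝒲 ≠ Set.univ → x ∉ ⋃₀ 𝒲 := by
    by_cases h : ⋃₀ 𝒲 = Set.univ
    · exact ⟨Classical.arbitrary X, fun h' => (h' h).elim⟩
    · obtain ⟨x, hx⟩ := (ne_univ_iff_exists_notMem _).1 h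
      exact ⟨x, fun _ => hx⟩
  choose w hw using hw
  let Φ B := thetaCl B ∪ w '' {𝒲 | 𝒲 ⊆ ⋃ x ∈ B, V x ∧ #𝒲 ≤ κ}
  have hΦ (B : Set X) (hB : #B ≤ κ) : #(Φ B) ≤ 2 ^ κ := by
    have hVB : #(⋃ x ∈ B, V x) ≤ 2 ^ κ :=
      calc #(⋃ x ∈ B, V x) ≤ κ * κ := (mk_biUnion_le _ _).trans <|
            mul_le_mul' hB (ciSup_le' fun x => hVκ x)
        _ ≤ 2 ^ κ := (mul_eq_self hκ).trans_le (cantor κ).le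
    calc #(Φ B) ≤ 2 ^ κ + 2 ^ κ := (mk_union_le _ _).trans <| add_le_add
          (hX.mk_thetaCl_le hκ hV hVκ hB)
          (mk_image_le.trans (mk_bounded_subset_le_two_power κ hκ hVB))
      _ = 2 ^ κ := add_eq_self h2κ
  obtain ⟨A, hAκ, hA⟩ := exists_mk_le_two_power_forall_subset κ Φ hκ hΦ
  refine ⟨A, hAκ, ⟨fun B hBA hB => subset_union_left.trans (hA B hBA hB),
    fun B hBA hB 𝒲 h𝒲B h𝒲 hA𝒲 => ?_⟩⟩
  by_contra hne
  exact hw 𝒲 hne (hA𝒲 (hA B hBA hB (Or.inr ⟨𝒲, ⟨h𝒲B, h𝒲⟩, rfl⟩)))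

theorem IsClosedOff.eq_univ [T2Space X] {A : Set X} (hA : IsClosedOff κ V A)
    (hV : ∀ x, IsThetaNhdBasis x (V x)) (hVκ : ∀ x, #(V x) ≤ κ) (haL : aLdeg X ≤ κ) :
    A = Set.univ := by
  classical
  have hAθ : thetaCl A ⊆ A := fun z hz =>
    let ⟨B, hBA, hB, hzB⟩ := (hV z).exists_subset_mk_le_mem_thetaCl hz
    hA.thetaCl_subset B hBA (hB.trans (hVκ z)) hzB
  by_contra hne
  obtain ⟨q, hqA⟩ := (ne_univ_iff_exists_notMem _).1 hne
  choose! W hWV hqW using fun x (hx : x ∈ A) =>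
    (hV x).exists_notMem (show x ≠ q from fun h => hqA (h ▸ hx))
  choose! G hG hxG hGA using fun x (hx : x ∉ A) => by
    simpa [thetaCl, not_nonempty_iff_eq_empty] using mt (@hAθ x) hx
  let U := A.piecewise (fun x => interior (W x)) G
  have hU (x : X) : IsOpen (U x) ∧ x ∈ U x := by
    by_cases hx : x ∈ A
    · simp only [U, piecewise_eq_of_mem _ _ _ hx]
      exact ⟨isOpen_interior, mem_interior_iff_mem_nhds.2 ((hV x).mem_nhds _ (hWV x hx))⟩
    · simp only [U, piecewise_eq_of_notMem _ _ _ hx]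
      exact ⟨hG x hx, hxG x hx⟩
  obtain ⟨C, hCκ, hC⟩ := (aLdeg_spec X).2 U (fun x => (hU x).1) (fun x => (hU x).2)
  have hAW : A ⊆ ⋃₀ (W '' (C ∩ A)) := by
    intro a ha
    obtain ⟨x, hxC, hax⟩ := mem_iUnion₂.1 (hC ▸ mem_univ a)
    by_cases hx : x ∈ A
    · rw [show U x = interior (W x) from piecewise_eq_of_mem _ _ _ hx] at hax
      exact ⟨W x, mem_image_of_mem _ ⟨hxC, hx⟩,
        closure_minimal interior_subset ((hV x).isClosed _ (hWV x hx)) hax⟩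
    · rw [show U x = G x from piecewise_eq_of_notMem _ _ _ hx] at hax
      exact (eq_empty_iff_forall_notMem.1 (hGA x hx) a ⟨hax, ha⟩).elim
  have hCA : #(↥(C ∩ A)) ≤ κ := (mk_le_mk_of_subset inter_subset_left).trans (hCκ.trans haL)
  have hWcov := hA.sUnion_eq_univ (C ∩ A) inter_subset_right hCA (W '' (C ∩ A))
    (image_subset_iff.2 fun x hx => mem_biUnion hx (hWV x hx.2)) (mk_image_le.trans hCA) hAW
  obtain ⟨_, ⟨x, hx, rfl⟩, hqx⟩ := hWcov ▸ mem_univ q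
  exact hqW x hx.2 hqx

end Theta

theorem statement12 (X : Type u) [TopologicalSpace X] (hX : UrysohnSpace X) :
    #X ≤ 2 ^ (kappaInv X * aLdeg X) := by
  rcases isEmpty_or_nonempty X with hX₀ | hX₀
  · simp
  have := hX.t2Space
  obtain ⟨hκ₀, hVex⟩ := kappaInv_spec_s12 X
  have hκ : kappaInv X ≤ kappaInv X * aLdeg X :=
    le_mul_of_one_le_right' (one_le_aleph0.trans (aLdeg_spec X).1)
  have haL : aLdeg X ≤ kappaInv X * aLdeg X :=
    le_mul_of_one_le_left' (one_le_aleph0.trans hκ₀)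
  choose V hVκ hV using hVex
  have hVκ' x : #(V x) ≤ kappaInv X * aLdeg X := (hVκ x).trans hκ
  obtain ⟨A, hAκ, hA⟩ := hX.exists_isClosedOff (hκ₀.trans hκ) hV hVκ'
  rw [← mk_univ, ← hA.eq_univ hV hVκ' haL]
  exact hAκ
end
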